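/- Let S be a finite semigroup, φ : A⁺ → S surjective, and let ≡_φ be the Karnofsky–Rhodes congruence (u ≡_φ v iff φ(u)=φ(v) and p_u, p_v have the same transition edges in Γ_φ). Let π : A⁺/≡_φ → S be the induced projection. Then for every idempotent e of S, the subsemigroup π⁻¹(e) of A⁺/≡_φ satisfies the identity xyz = xz. -/

import Mathlib

variable {A S : Type*}

/-- Image of a word under the extension of `φ` to the free monoid, in `S¹ = WithOne S`. -/
def phiStar [Semigroup S] (φ : A → S) (w : List A) : WithOne S :=
  (w.map fun a => (φ a : WithOne S)).prod

/-- `φ` induces a surjective homomorphism `A⁺ → S`. -/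
def PlusSurj [Semigroup S] (φ : A → S) : Prop :=
  ∀ s : S, ∃ w : List A, w ≠ [] ∧ phiStar φ w = (s : WithOne S)

/-- An edge `((s₁,t₁), a, (s₂,t₂))` of the two-sided Cayley graph `Γ_φ`. -/
def IsEdge [Semigroup S] (φ : A → S)
    (e : (WithOne S × WithOne S) × A × (WithOne S × WithOne S)) : Prop :=
  e.1.1 * (φ e.2.1 : WithOne S) = e.2.2.1 ∧ e.1.2 = (φ e.2.1 : WithOne S) * e.2.2.2

/-- There is a path labeled `w` from `p` to `q` in `Γ_φ`. -/
def HasPath [Semigroup S] (φ : A → S) (p q : WithOne S × WithOne S) (w : List A) : Prop :=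
  p.1 * phiStar φ w = q.1 ∧ p.2 = phiStar φ w * q.2

/-- There is a (possibly empty) path from `p` to `q` in `Γ_φ`. -/
def Reach [Semigroup S] (φ : A → S) (p q : WithOne S × WithOne S) : Prop :=
  ∃ w : List A, HasPath φ p q w

/-- `p` and `q` lie in the same strongly connected component of `Γ_φ`. -/
def SameSCC [Semigroup S] (φ : A → S) (p q : WithOne S × WithOne S) : Prop :=
  Reach φ p q ∧ Reach φ q p

/-- `p` is a vertex of the canonical path `p_u` of the word `u` in `Γ_φ`. -/
def OnPath [Semigroup S] (φ : A → S) (u : List A) (p : WithOne S × WithOne S) : Prop :=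
  ∃ u₁ u₂ : List A, u = u₁ ++ u₂ ∧ p = (phiStar φ u₁, phiStar φ u₂)

/-- The paths `p_u` and `p_v` meet the same strongly connected components of `Γ_φ`,
i.e. `C(p_u) = C(p_v)`. -/
def SameComponents [Semigroup S] (φ : A → S) (u v : List A) : Prop :=
  (∀ p, OnPath φ u p → ∃ q, OnPath φ v q ∧ SameSCC φ p q) ∧
  (∀ q, OnPath φ v q → ∃ p, OnPath φ u p ∧ SameSCC φ p q)

/-- The two-sided connected congruence `u ≈_φ v`. -/
def ConnCong [Semigroup S] (φ : A → S) (u v : List A) : Prop :=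
  phiStar φ u = phiStar φ v ∧ SameComponents φ u v

/-- `e` is an edge traversed by the canonical path `p_u` in `Γ_φ`. -/
def EdgeOfPath [Semigroup S] (φ : A → S) (u : List A)
    (e : (WithOne S × WithOne S) × A × (WithOne S × WithOne S)) : Prop :=
  ∃ u₁ u₂ : List A, u = u₁ ++ e.2.1 :: u₂ ∧
    e.1 = (phiStar φ u₁, phiStar φ (e.2.1 :: u₂)) ∧
    e.2.2 = (phiStar φ (u₁ ++ [e.2.1]), phiStar φ u₂)

/-- `e` is a transition edge traversed by `p_u`: an edge of `p_u` whose endpoints lie in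
distinct strongly connected components of `Γ_φ`. -/
def IsTransitionOfPath [Semigroup S] (φ : A → S) (u : List A)
    (e : (WithOne S × WithOne S) × A × (WithOne S × WithOne S)) : Prop :=
  EdgeOfPath φ u e ∧ ¬ SameSCC φ e.1 e.2.2

/-- The two-sided Karnofsky–Rhodes congruence `u ≡_φ v`: same image under `φ` and same set
of transition edges. -/
def KRCong [Semigroup S] (φ : A → S) (u v : List A) : Prop :=
  phiStar φ u = phiStar φ v ∧
  ∀ e, IsTransitionOfPath φ u e ↔ IsTransitionOfPath φ v e

/-! If `φ(u) φ(w) = φ(u)` and `φ(w) φ(v) = φ(v)`, every vertex `(φ(u w₁), φ(w₂ v))` of `p_{uwv}`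
read inside `w = w₁ w₂` lies in the strongly connected component of `(φ(u), φ(v))`: reading `w₁`
leads there from `(φ(u), φ(v))` and reading `w₂` leads back. So no edge inside `w` is a transition
edge, while the edges read inside `u` and `v` have the same endpoints in `p_{uwv}` as in `p_{uv}`.
Hence `uwv ≡_φ uv`; for `x, y, z ∈ π⁻¹(e)` take `u, w, v = x, y, z`. -/

section KarnofskyRhodes

variable [Semigroup S] (φ : A → S)

@[simp]
lemma phiStar_cons (a : A) (u : List A) :
    phiStar φ (a :: u) = (φ a : WithOne S) * phiStar φ u := by
  simp [phiStar]

@[simp]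
lemma phiStar_append (u v : List A) :
    phiStar φ (u ++ v) = phiStar φ u * phiStar φ v := by
  simp [phiStar]

variable {φ}

lemma Reach.trans {p q r : WithOne S × WithOne S} (hpq : Reach φ p q) (hqr : Reach φ q r) :
    Reach φ p r := by
  obtain ⟨w₁, h₁, h₁'⟩ := hpq
  obtain ⟨w₂, h₂, h₂'⟩ := hqr
  exact ⟨w₁ ++ w₂, by rw [phiStar_append, ← mul_assoc, h₁, h₂],
    by rw [phiStar_append, mul_assoc, ← h₂', h₁']⟩

lemma SameSCC.symm {p q : WithOne S × WithOne S} (h : SameSCC φ p q) : SameSCC φ q p :=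
  ⟨h.2, h.1⟩

lemma SameSCC.trans {p q r : WithOne S × WithOne S} (hpq : SameSCC φ p q)
    (hqr : SameSCC φ q r) : SameSCC φ p r :=
  ⟨hpq.1.trans hqr.1, hqr.2.trans hpq.2⟩

lemma sameSCC_mul_of_stabilizes {s t : WithOne S} {w₁ w₂ : List A}
    (hs : s * phiStar φ (w₁ ++ w₂) = s) (ht : phiStar φ (w₁ ++ w₂) * t = t) :
    SameSCC φ (s, t) (s * phiStar φ w₁, phiStar φ w₂ * t) := by
  rw [phiStar_append] at hs ht
  exact ⟨⟨w₁, rfl, by rw [← mul_assoc, ht]⟩, ⟨w₂, by rw [mul_assoc, hs], rfl⟩⟩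

variable (φ) in
def pathEdge (u₁ : List A) (a : A) (u₂ : List A) :
    (WithOne S × WithOne S) × A × (WithOne S × WithOne S) :=
  ((phiStar φ u₁, phiStar φ (a :: u₂)), a, (phiStar φ (u₁ ++ [a]), phiStar φ u₂))

variable (φ) in
/-- The edges of `p_{l u r}` that read a letter of the factor `u`. -/
def SegmentEdge (l u r : List A) (E : (WithOne S × WithOne S) × A × (WithOne S × WithOne S)) :
    Prop :=
  ∃ u₁ a u₂, u = u₁ ++ a :: u₂ ∧ E = pathEdge φ (l ++ u₁) a (u₂ ++ r)

variable {E : (WithOne S × WithOne S) × A × (WithOne S × WithOne S)}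

lemma edgeOfPath_iff_segmentEdge {u : List A} : EdgeOfPath φ u E ↔ SegmentEdge φ [] u [] E := by
  obtain ⟨p, b, q⟩ := E
  constructor
  · rintro ⟨u₁, u₂, hu, hp, hq⟩
    exact ⟨u₁, b, u₂, hu, by simp only [pathEdge, List.nil_append, List.append_nil, ← hp, ← hq]⟩
  · rintro ⟨u₁, a, u₂, hu, hE⟩
    simp only [pathEdge, List.nil_append, List.append_nil, Prod.mk.injEq] at hE
    obtain ⟨hp, rfl, hq⟩ := hE
    exact ⟨u₁, u₂, hu, hp, hq⟩

lemma segmentEdge_append {l u v r : List A} :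
    SegmentEdge φ l (u ++ v) r E ↔ SegmentEdge φ l u (v ++ r) E ∨ SegmentEdge φ (l ++ u) v r E := by
  constructor
  · rintro ⟨l₁, a, l₂, hl, rfl⟩
    rcases List.append_eq_append_iff.mp hl with ⟨v₁, rfl, hv⟩ | ⟨_ | ⟨b, u₂⟩, rfl, hl₂⟩
    · exact Or.inr ⟨v₁, a, l₂, hv, by simp⟩
    · exact Or.inr ⟨[], a, l₂, by simpa using hl₂.symm, by simp⟩
    · obtain ⟨rfl, rfl⟩ := List.cons.inj hl₂
      exact Or.inl ⟨l₁, a, u₂, rfl, by simp⟩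
  · rintro (⟨u₁, a, u₂, rfl, rfl⟩ | ⟨v₁, a, v₂, rfl, rfl⟩)
    · exact ⟨u₁, a, u₂ ++ v, by simp, by simp⟩
    · exact ⟨u ++ v₁, a, v₂, by simp, by simp⟩

lemma SegmentEdge.congr {l l' u r r' : List A} (h : SegmentEdge φ l u r E)
    (hl : phiStar φ l = phiStar φ l') (hr : phiStar φ r = phiStar φ r') :
    SegmentEdge φ l' u r' E := by
  obtain ⟨u₁, a, u₂, rfl, rfl⟩ := h
  exact ⟨u₁, a, u₂, rfl, by simp [pathEdge, hl, hr]⟩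

lemma SegmentEdge.sameSCC {l w r : List A} (h : SegmentEdge φ l w r E)
    (hl : phiStar φ l * phiStar φ w = phiStar φ l) (hr : phiStar φ w * phiStar φ r = phiStar φ r) :
    SameSCC φ E.1 E.2.2 := by
  obtain ⟨w₁, a, w₂, rfl, rfl⟩ := h
  have hsource := sameSCC_mul_of_stabilizes (w₁ := w₁) (w₂ := a :: w₂) hl hr
  have htarget := sameSCC_mul_of_stabilizes (w₁ := w₁ ++ [a]) (w₂ := w₂)
    (by simpa using hl) (by simpa using hr)
  simpa [pathEdge, mul_assoc] using hsource.symm.trans htarget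

lemma krCong_append_append_of_stabilizes {u w v : List A}
    (hu : phiStar φ u * phiStar φ w = phiStar φ u)
    (hv : phiStar φ w * phiStar φ v = phiStar φ v) :
    KRCong φ (u ++ w ++ v) (u ++ v) := by
  refine ⟨by simp only [phiStar_append, hu], fun E => and_congr_left fun hE => ?_⟩
  simp only [edgeOfPath_iff_segmentEdge, segmentEdge_append, List.nil_append, List.append_nil]
  have hsuffix : phiStar φ (w ++ v) = phiStar φ v := by simp only [phiStar_append, hv]
  have hprefix : phiStar φ (u ++ w) = phiStar φ u := by simp only [phiStar_append, hu]
  constructor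
  · rintro ((h | h) | h)
    · exact Or.inl (h.congr rfl hsuffix)
    · exact absurd (h.sameSCC hu hv) hE
    · exact Or.inr (h.congr hprefix rfl)
  · rintro (h | h)
    · exact Or.inl (Or.inl (h.congr rfl hsuffix.symm))
    · exact Or.inr (h.congr hprefix.symm rfl)

end KarnofskyRhodes

theorem kr_preimage_of_idempotent_satisfies_xyz_eq_xz_general [Semigroup S]
    (φ : A → S) (e : S) (he : e * e = e)
    (x y z : List A)
    (hxe : phiStar φ x = (e : WithOne S)) (hye : phiStar φ y = (e : WithOne S))
    (hze : phiStar φ z = (e : WithOne S)) :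
    KRCong φ (x ++ y ++ z) (x ++ z) := by
  have hee : (e : WithOne S) * e = e := by rw [← WithOne.coe_mul, he]
  exact krCong_append_append_of_stabilizes (by rw [hxe, hye, hee]) (by rw [hye, hze, hee])

/-- In the Karnofsky–Rhodes expansion, the preimage of an idempotent `e` of `S` satisfies
the identity `xyz = xz`. -/
theorem kr_preimage_of_idempotent_satisfies_xyz_eq_xz [Finite S] [Semigroup S]
    (φ : A → S) (hφ : PlusSurj φ) (e : S) (he : e * e = e)
    (x y z : List A) (hx : x ≠ []) (hy : y ≠ []) (hz : z ≠ [])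
    (hxe : phiStar φ x = (e : WithOne S)) (hye : phiStar φ y = (e : WithOne S))
    (hze : phiStar φ z = (e : WithOne S)) :
    KRCong φ (x ++ y ++ z) (x ++ z) :=
  kr_preimage_of_idempotent_satisfies_xyz_eq_xz_general φ e he x y z hxe hye hze
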